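/- For k ∈ ℕ with k ≥ 1, let N = 2^k, let X_0,…,X_{N−1} be i.i.d. standard normal random variables, and set τ*(k) = √(2·(log 2)·k·(1 − 1/√k)). Then P(max_{0 ≤ n ≤ N−1} X_n < τ*(k)) ≤ exp(−2^{√k} · (1/√(2π)) · √(2(log 2)k(1−1/√k)) / (1 + 2(log 2)k(1−1/√k))); in particular, lim_{k→∞} 2^k · P(max_{0 ≤ n ≤ N−1} X_n < τ*(k)) = 0, i.e., the lower-tail probability of the maximum is o(2^{−k}). -/

import Mathlib

/-!
Independence turns the probability into `Φ(τ)^N ≤ exp (-N (1 - Φ(τ)))`, so everything rests on a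
lower bound for the Gaussian tail: Mills' inequality `1 - Φ(τ) ≥ φ(τ) τ / (1 + τ²)`, obtained by
integrating the derivative of `-φ(x) x / (1 + x²)`, which is at most `φ(x)`. The threshold is
chosen so that `2^k φ(τ*(k)) = 2^{√k} / √(2π)`; the resulting exponent eventually exceeds `k`,
whence `2^k P(…) ≤ (2/e)^k → 0`.
-/

open MeasureTheory ProbabilityTheory Filter Real Set Topology

section MillsInequality

lemma hasDerivAt_neg_exp_neg_sq_div_two_mul_div (x : ℝ) :
    HasDerivAt (fun x ↦ -(exp (-x ^ 2 / 2) * (x / (1 + x ^ 2))))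
      (exp (-x ^ 2 / 2) * ((x ^ 4 + 2 * x ^ 2 - 1) / (1 + x ^ 2) ^ 2)) x := by
  have hexp : HasDerivAt (fun x ↦ exp (-x ^ 2 / 2)) (exp (-x ^ 2 / 2) * (-x)) x := by
    have hsq : HasDerivAt (fun x : ℝ ↦ -x ^ 2 / 2) (-x) x := by
      simpa using ((hasDerivAt_pow 2 x).neg.div_const 2).congr_deriv (by ring)
    exact hsq.exp
  have hfrac : HasDerivAt (fun x ↦ x / (1 + x ^ 2))
      ((1 * (1 + x ^ 2) - x * (2 * x)) / (1 + x ^ 2) ^ 2) x := by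
    refine (hasDerivAt_id x).div ?_ (by positivity)
    simpa using (hasDerivAt_pow 2 x).const_add 1
  refine (hexp.mul hfrac).neg.congr_deriv ?_
  field_simp
  ring

lemma abs_div_one_add_sq_sq_le_one (x : ℝ) :
    |(x ^ 4 + 2 * x ^ 2 - 1) / (1 + x ^ 2) ^ 2| ≤ 1 := by
  rw [abs_div, abs_of_pos (by positivity : (0 : ℝ) < (1 + x ^ 2) ^ 2), div_le_one (by positivity),
    abs_le]
  constructor <;> nlinarith [sq_nonneg x, sq_nonneg (x ^ 2)]

lemma integrable_exp_neg_sq_div_two : Integrable fun x : ℝ ↦ exp (-x ^ 2 / 2) := by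
  convert integrable_exp_neg_mul_sq (b := 1 / 2) (by norm_num) using 2
  ring_nf

lemma tendsto_exp_neg_sq_div_two_atTop : Tendsto (fun x : ℝ ↦ exp (-x ^ 2 / 2)) atTop (𝓝 0) :=
  tendsto_exp_atBot.comp <|
    (tendsto_neg_atTop_atBot.comp (tendsto_pow_atTop two_ne_zero)).atBot_div_const two_pos

lemma tendsto_exp_neg_sq_div_two_mul_div_atTop :
    Tendsto (fun x : ℝ ↦ exp (-x ^ 2 / 2) * (x / (1 + x ^ 2))) atTop (𝓝 0) := by
  refine squeeze_zero_norm (fun x ↦ ?_) tendsto_exp_neg_sq_div_two_atTop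
  have hx : |x| ≤ 1 + x ^ 2 := by nlinarith [sq_abs x, sq_nonneg (|x| - 1)]
  simp only [norm_mul, norm_div, Real.norm_eq_abs, abs_exp]
  rw [abs_of_pos (by positivity : (0 : ℝ) < 1 + x ^ 2)]
  exact mul_le_of_le_one_right (exp_pos _).le (div_le_one_of_le₀ hx (by positivity))

theorem exp_neg_sq_div_two_mul_div_le_integral_Ioi (c : ℝ) :
    exp (-c ^ 2 / 2) * (c / (1 + c ^ 2)) ≤ ∫ x in Ioi c, exp (-x ^ 2 / 2) := by
  set g : ℝ → ℝ := fun x ↦ exp (-x ^ 2 / 2) * ((x ^ 4 + 2 * x ^ 2 - 1) / (1 + x ^ 2) ^ 2)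
  have hg_le : ∀ x, g x ≤ exp (-x ^ 2 / 2) := fun x ↦
    mul_le_of_le_one_right (exp_pos _).le ((le_abs_self _).trans (abs_div_one_add_sq_sq_le_one x))
  have hg_int : IntegrableOn g (Ioi c) := by
    refine integrable_exp_neg_sq_div_two.restrict.mono (by fun_prop (disch := positivity))
      (ae_of_all _ fun x ↦ ?_)
    rw [norm_mul, Real.norm_eq_abs, Real.norm_eq_abs, abs_exp]
    exact mul_le_of_le_one_right (exp_pos _).le (abs_div_one_add_sq_sq_le_one x)
  have hftc := integral_Ioi_of_hasDerivAt_of_tendsto' (fun x _ ↦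
    hasDerivAt_neg_exp_neg_sq_div_two_mul_div x) hg_int
    (by simpa using tendsto_exp_neg_sq_div_two_mul_div_atTop.neg)
  rw [zero_sub, neg_neg] at hftc
  rw [← hftc]
  exact setIntegral_mono_on hg_int integrable_exp_neg_sq_div_two.restrict measurableSet_Ioi
    fun x _ ↦ hg_le x

theorem le_gaussianReal_real_Ici (c : ℝ) :
    (√(2 * π))⁻¹ * exp (-c ^ 2 / 2) * (c / (1 + c ^ 2)) ≤ (gaussianReal 0 1).real (Ici c) := by
  rw [measureReal_def, gaussianReal_apply_eq_integral 0 one_ne_zero,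
    ENNReal.toReal_ofReal (integral_nonneg fun x ↦ gaussianPDFReal_nonneg _ _ _),
    integral_Ici_eq_integral_Ioi]
  simp only [gaussianPDFReal, NNReal.coe_one, mul_one, sub_zero]
  rw [integral_const_mul, mul_assoc]
  exact mul_le_mul_of_nonneg_left (exp_neg_sq_div_two_mul_div_le_integral_Ioi c) (by positivity)

end MillsInequality

section IID

variable {Ω β : Type*} [MeasurableSpace Ω] [MeasurableSpace β] {μ : Measure Ω}

theorem ProbabilityTheory.iIndepFun.measure_forall_lt_mem_eq_pow {X : ℕ → Ω → β}
    (hindep : iIndepFun X μ) (hXm : ∀ n, Measurable (X n)) {ν : Measure β}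
    (hXd : ∀ n, μ.map (X n) = ν) (N : ℕ) {s : Set β} (hs : MeasurableSet s) :
    μ {ω | ∀ n < N, X n ω ∈ s} = ν s ^ N := by
  have hset : {ω | ∀ n < N, X n ω ∈ s} = ⋂ n ∈ Finset.range N, X n ⁻¹' s := by
    ext ω
    simp
  rw [hset, hindep.meas_biInter fun n _ ↦ ⟨s, hs, rfl⟩]
  simp_rw [← Measure.map_apply (hXm _) hs, hXd]
  rw [Finset.prod_const, Finset.card_range]

lemma measureReal_compl_le_exp_neg {ν : Measure β} [IsProbabilityMeasure ν] {s : Set β}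
    (hs : MeasurableSet s) : ν.real sᶜ ≤ exp (-ν.real s) := by
  rw [probReal_compl_eq_one_sub hs]
  exact one_sub_le_exp_neg _

theorem ProbabilityTheory.iIndepFun.measureReal_forall_lt_le_exp {X : ℕ → Ω → ℝ}
    (hindep : iIndepFun X μ) (hXm : ∀ n, Measurable (X n))
    (hXd : ∀ n, μ.map (X n) = gaussianReal 0 1) (N : ℕ) (c : ℝ) :
    μ.real {ω | ∀ n < N, X n ω < c} ≤
      exp (-(N * ((√(2 * π))⁻¹ * exp (-c ^ 2 / 2) * (c / (1 + c ^ 2))))) := by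
  have hpow : μ.real {ω | ∀ n < N, X n ω < c} = (gaussianReal 0 1).real (Iio c) ^ N := by
    rw [measureReal_def, measureReal_def, ← ENNReal.toReal_pow]
    exact congrArg _ (hindep.measure_forall_lt_mem_eq_pow hXm hXd N measurableSet_Iio)
  calc μ.real {ω | ∀ n < N, X n ω < c}
      ≤ exp (-(gaussianReal 0 1).real (Ici c)) ^ N := by
        rw [hpow, ← compl_Ici]
        exact pow_le_pow_left₀ measureReal_nonneg
          (measureReal_compl_le_exp_neg measurableSet_Ici) N
    _ = exp (-(N * (gaussianReal 0 1).real (Ici c))) := by rw [← exp_nat_mul]; ring_nf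
    _ ≤ _ := by gcongr; exact le_gaussianReal_real_Ici c

end IID

section Threshold

noncomputable def tauStarSq (k : ℕ) : ℝ := 2 * log 2 * k * (1 - 1 / √k)

lemma tauStarSq_eq (k : ℕ) : tauStarSq k = 2 * log 2 * (k - √k) := by
  rw [tauStarSq, mul_assoc _ (k : ℝ), mul_one_sub, mul_one_div, div_sqrt]

lemma tauStarSq_nonneg (k : ℕ) : 0 ≤ tauStarSq k := by
  have hsqrt : √k ≤ k :=
    sqrt_le_iff.mpr ⟨k.cast_nonneg, by exact_mod_cast Nat.le_self_pow two_ne_zero k⟩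
  rw [tauStarSq_eq]
  have := log_pos one_lt_two
  nlinarith

lemma tauStarSq_le (k : ℕ) : tauStarSq k ≤ 2 * k := by
  rw [tauStarSq_eq]
  nlinarith [log_two_lt_d9, log_pos one_lt_two, sqrt_nonneg (k : ℝ)]

lemma one_le_tauStarSq {k : ℕ} (hk : 4 ≤ k) : 1 ≤ tauStarSq k := by
  have hk' : (4 : ℝ) ≤ k := by exact_mod_cast hk
  have hsqrt : 2 * √k ≤ k := by nlinarith [sq_sqrt k.cast_nonneg, sqrt_nonneg (k : ℝ)]
  rw [tauStarSq_eq]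
  nlinarith [log_two_gt_d9]

lemma two_pow_mul_exp_neg_tauStarSq_div_two (k : ℕ) :
    2 ^ k * exp (-tauStarSq k / 2) = (2 : ℝ) ^ √k := by
  rw [tauStarSq_eq, ← rpow_natCast, rpow_def_of_pos two_pos, rpow_def_of_pos two_pos, ← exp_add]
  ring_nf

lemma tendsto_two_rpow_sqrt_div_sq_atTop :
    Tendsto (fun x : ℝ ↦ 2 ^ √x / x ^ 2) atTop atTop := by
  have hlog := log_pos one_lt_two
  have hy : Tendsto (fun x : ℝ ↦ log 2 * √x) atTop atTop :=
    tendsto_sqrt_atTop.const_mul_atTop hlog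
  refine (((tendsto_exp_div_pow_atTop 4).comp hy).const_mul_atTop (pow_pos hlog 4)).congr'
    ((eventually_ge_atTop 0).mono fun x hx ↦ ?_)
  have hx4 : x ^ 2 = √x ^ 4 := by rw [show 4 = 2 * 2 by rfl, pow_mul, sq_sqrt hx]
  simp only [Function.comp, hx4, rpow_def_of_pos two_pos]
  field_simp

lemma eventually_le_two_rpow_sqrt_mul_tauStarSq :
    ∀ᶠ k : ℕ in atTop, (k : ℝ) ≤
      2 ^ √k * (√(2 * π))⁻¹ * (√(tauStarSq k) / (1 + tauStarSq k)) := by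
  filter_upwards [eventually_ge_atTop 4,
    (tendsto_two_rpow_sqrt_div_sq_atTop.comp tendsto_natCast_atTop_atTop).eventually_ge_atTop 9]
    with k hk hgrowth
  have hk' : (4 : ℝ) ≤ k := by exact_mod_cast hk
  have hgrowth : 9 * (k : ℝ) ^ 2 ≤ 2 ^ √k := by
    simpa [le_div_iff₀ (by positivity : (0 : ℝ) < k ^ 2)] using hgrowth
  have hpi : 1 / 3 ≤ (√(2 * π))⁻¹ := by
    rw [one_div, inv_le_inv₀ (by norm_num) (by positivity), sqrt_le_left (by norm_num)]
    nlinarith [pi_lt_d2]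
  have hratio : 1 / (3 * k) ≤ √(tauStarSq k) / (1 + tauStarSq k) := by
    calc 1 / (3 * k) ≤ 1 / (1 + tauStarSq k) :=
          one_div_le_one_div_of_le (by linarith [tauStarSq_nonneg k])
            (by linarith [tauStarSq_le k])
      _ ≤ _ := div_le_div_of_nonneg_right (one_le_sqrt.mpr (one_le_tauStarSq hk))
          (by linarith [tauStarSq_nonneg k])
  calc (k : ℝ) = 9 * k ^ 2 * (1 / 3) * (1 / (3 * k)) := by field_simp; norm_num
    _ ≤ _ := by gcongr

lemma tendsto_two_pow_mul_exp_neg_of_eventually_le {E : ℕ → ℝ}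
    (hE : ∀ᶠ k : ℕ in atTop, (k : ℝ) ≤ E k) :
    Tendsto (fun k ↦ (2 : ℝ) ^ k * exp (-E k)) atTop (𝓝 0) := by
  have hratio : 2 * exp (-1) < 1 := by
    rw [exp_neg, ← div_eq_mul_inv, div_lt_one (exp_pos 1)]
    linarith [exp_one_gt_d9]
  refine squeeze_zero' (.of_forall fun k ↦ by positivity) (hE.mono fun k hk ↦ ?_)
    (tendsto_pow_atTop_nhds_zero_of_lt_one (by positivity) hratio)
  rw [mul_pow, ← exp_nat_mul, mul_neg_one]
  gcongr

end Threshold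

theorem max_iid_gaussian_lower_tail_superexponential_general
    {Ω : Type*} [MeasureSpace Ω]
    (X : ℕ → Ω → ℝ)
    (hXm : ∀ n, Measurable (X n))
    (hXd : ∀ n, Measure.map (X n) ℙ = gaussianReal 0 1)
    (hindep : iIndepFun X ℙ) :
    (∀ k : ℕ, 1 ≤ k →
      (ℙ {ω | ∀ n < 2 ^ k,
          X n ω < Real.sqrt (2 * Real.log 2 * k * (1 - 1 / Real.sqrt k))}).toReal ≤
        Real.exp (-((2 : ℝ) ^ (Real.sqrt k) * (Real.sqrt (2 * Real.pi))⁻¹ *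
          (Real.sqrt (2 * Real.log 2 * k * (1 - 1 / Real.sqrt k)) /
            (1 + 2 * Real.log 2 * k * (1 - 1 / Real.sqrt k)))))) ∧
    Tendsto (fun k : ℕ => (2 : ℝ) ^ k *
        (ℙ {ω | ∀ n < 2 ^ k,
          X n ω < Real.sqrt (2 * Real.log 2 * k * (1 - 1 / Real.sqrt k))}).toReal)
      atTop (nhds 0) := by
  have tail (k : ℕ) : (ℙ {ω | ∀ n < 2 ^ k, X n ω < √(tauStarSq k)}).toReal ≤
      exp (-(2 ^ √k * (√(2 * π))⁻¹ * (√(tauStarSq k) / (1 + tauStarSq k)))) := by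
    rw [← measureReal_def]
    convert hindep.measureReal_forall_lt_le_exp hXm hXd (2 ^ k) (√(tauStarSq k)) using 3
    rw [sq_sqrt (tauStarSq_nonneg k), ← two_pow_mul_exp_neg_tauStarSq_div_two]
    push_cast
    ring
  refine ⟨fun k _ ↦ tail k, squeeze_zero' (.of_forall fun k ↦ by positivity)
    (.of_forall fun k ↦ mul_le_mul_of_nonneg_left (tail k) (by positivity))
    (tendsto_two_pow_mul_exp_neg_of_eventually_le eventually_le_two_rpow_sqrt_mul_tauStarSq)⟩

/-- **Lemma 1 (second part).**
For `k ≥ 1`, `N = 2^k`, `X_0, …, X_{N−1}` i.i.d. standard normal, and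
`τ*(k) = √(2·(log 2)·k·(1 − 1/√k))`, the lower-tail probability of the maximum
satisfies
`P(max_n X_n < τ*(k)) ≤ exp(−2^{√k}·(1/√(2π))·τ*(k)/(1 + τ*(k)²))`,
and in particular `2^k · P(max_n X_n < τ*(k)) → 0`, i.e. it is `o(2^{−k})`. -/
theorem max_iid_gaussian_lower_tail_superexponential
    {Ω : Type*} [MeasureSpace Ω] [IsProbabilityMeasure (ℙ : Measure Ω)]
    (X : ℕ → Ω → ℝ)
    (hXm : ∀ n, Measurable (X n))
    (hXd : ∀ n, Measure.map (X n) ℙ = gaussianReal 0 1)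
    (hindep : iIndepFun X ℙ) :
    (∀ k : ℕ, 1 ≤ k →
      (ℙ {ω | ∀ n < 2 ^ k,
          X n ω < Real.sqrt (2 * Real.log 2 * k * (1 - 1 / Real.sqrt k))}).toReal ≤
        Real.exp (-((2 : ℝ) ^ (Real.sqrt k) * (Real.sqrt (2 * Real.pi))⁻¹ *
          (Real.sqrt (2 * Real.log 2 * k * (1 - 1 / Real.sqrt k)) /
            (1 + 2 * Real.log 2 * k * (1 - 1 / Real.sqrt k)))))) ∧
    Tendsto (fun k : ℕ => (2 : ℝ) ^ k *
        (ℙ {ω | ∀ n < 2 ^ k,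
          X n ω < Real.sqrt (2 * Real.log 2 * k * (1 - 1 / Real.sqrt k))}).toReal)
      atTop (nhds 0) :=
  max_iid_gaussian_lower_tail_superexponential_general X hXm hXd hindep
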